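/- arXiv:1701.08392 — 3 statements merged into one kernel-verified Lean document; each statement's English description precedes it below -/
import Mathlib

section
/- Consider the bang-bang control sequence Uₙ(t) = (-1)^k for t ∈ [kT/n, (k+1)T/n), 0 ≤ k ≤ n-1. Then the corresponding trajectory satisfies |X^{Uₙ}(t)| ≤ T/n for all t ∈ [0,T], and consequently J(Uₙ) ≤ T³/n². -/
/-!
With `c = T/n`, the control is the square wave `s ↦ (-1)^⌊s/c⌋`. On the block `[kc, (k+1)c]`
its primitive is affine with slope `(-1)^k`, and it vanishes at `kc` for even `k` and equals `c`
for odd `k`. So the primitive is a triangle wave oscillating between `0` and `c`, whence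
`|X| ≤ c` and `J ≤ T c²`.
-/

open MeasureTheory intervalIntegral

noncomputable def squareWave (c s : ℝ) : ℝ := (-1) ^ ⌊s / c⌋.toNat

namespace squareWave

variable {c : ℝ}

theorem eq_neg_one_pow_of_mem_Ico (hc : 0 < c) {k : ℕ} {s : ℝ}
    (hs : s ∈ Set.Ico (k * c) ((k + 1) * c)) :
    squareWave c s = (-1) ^ k := by
  have hfloor : ⌊s / c⌋ = k := by
    rw [Int.floor_eq_iff, le_div_iff₀ hc, div_lt_iff₀ hc]
    exact_mod_cast hs
  simp [squareWave, hfloor]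

theorem abs_le_one (c s : ℝ) : |squareWave c s| ≤ 1 := by
  simp [squareWave]

theorem measurable (c : ℝ) : Measurable (squareWave c) :=
  (measurable_from_top (f := fun m : ℤ => (-1 : ℝ) ^ m.toNat)).comp
    (measurable_id.div_const c).floor

theorem intervalIntegrable (c a b : ℝ) : IntervalIntegrable (squareWave c) volume a b := by
  rw [intervalIntegrable_iff]
  refine Measure.integrableOn_of_bounded (M := 1) measure_Ioc_lt_top.ne
    (measurable c).aestronglyMeasurable ?_
  filter_upwards with s using abs_le_one c s

theorem continuous_primitive (c : ℝ) :
    Continuous fun t => ∫ s in (0 : ℝ)..t, squareWave c s :=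
  intervalIntegral.continuous_primitive (intervalIntegrable c) 0

theorem integral_block (hc : 0 < c) {k : ℕ} {t : ℝ} (ht : t ∈ Set.Icc (k * c) ((k + 1) * c)) :
    ∫ s in (k * c)..t, squareWave c s = (-1) ^ k * (t - k * c) := by
  have hae : ∀ᵐ s ∂volume, s ∈ Set.uIoc (k * c) t → squareWave c s = (-1) ^ k := by
    filter_upwards [Measure.ae_ne volume ((k + 1) * c)] with s hs hmem
    rw [Set.uIoc_of_le ht.1] at hmem
    exact eq_neg_one_pow_of_mem_Ico hc ⟨hmem.1.le, (hmem.2.trans ht.2).lt_of_ne hs⟩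
  rw [integral_congr_ae hae, intervalIntegral.integral_const, smul_eq_mul, mul_comm]

theorem integral_zero_nat_mul (hc : 0 < c) (k : ℕ) :
    ∫ s in (0 : ℝ)..(k * c), squareWave c s = c * (1 - (-1) ^ k) / 2 := by
  induction k with
  | zero => simp
  | succ k ih =>
    have hblock := integral_block hc (k := k) (t := (k + 1) * c) ⟨by nlinarith, le_rfl⟩
    push_cast
    rw [← integral_add_adjacent_intervals (intervalIntegrable c 0 (k * c))
      (intervalIntegrable c _ _), ih, hblock, pow_succ]
    ring

theorem integral_zero_mem_Icc (hc : 0 < c) {t : ℝ} (ht : 0 ≤ t) :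
    ∫ s in (0 : ℝ)..t, squareWave c s ∈ Set.Icc 0 c := by
  set k := ⌊t / c⌋₊
  have hk : t ∈ Set.Icc (k * c) ((k + 1) * c) :=
    ⟨(le_div_iff₀ hc).1 (Nat.floor_le (div_nonneg ht hc.le)),
      ((div_lt_iff₀ hc).1 (Nat.lt_floor_add_one (t / c))).le⟩
  rw [← integral_add_adjacent_intervals (intervalIntegrable c 0 (k * c))
    (intervalIntegrable c _ _), integral_zero_nat_mul hc, integral_block hc hk]
  have hu : 0 ≤ t - k * c ∧ t - k * c ≤ c := ⟨by linarith [hk.1], by linarith [hk.2]⟩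
  rcases neg_one_pow_eq_or ℝ k with h | h <;> rw [h] <;> constructor <;> linarith

theorem abs_integral_zero_le (hc : 0 < c) {t : ℝ} (ht : 0 ≤ t) :
    |∫ s in (0 : ℝ)..t, squareWave c s| ≤ c := by
  obtain ⟨h0, hle⟩ := integral_zero_mem_Icc hc ht
  rwa [abs_of_nonneg h0]

end squareWave

/-- For the bang-bang control `Uₙ(t) = (-1)^k` on `[kT/n, (k+1)T/n)`, the
trajectory `X^{Uₙ}(t) = ∫₀ᵗ Uₙ(s) ds` satisfies `|X^{Uₙ}(t)| ≤ T/n` on `[0,T]`,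
and consequently `J(Uₙ) = ∫₀ᵀ X^{Uₙ}(t)² dt ≤ T³/n²`. -/
theorem bang_bang_estimate (T : ℝ) (hT : 0 < T) (n : ℕ) (hn : 1 ≤ n)
    (U : ℝ → ℝ) (hU : ∀ t, U t = (-1 : ℝ) ^ (⌊t * n / T⌋.toNat)) :
    (∀ t ∈ Set.Icc (0 : ℝ) T, |∫ s in (0 : ℝ)..t, U s| ≤ T / n) ∧
      (∫ t in (0 : ℝ)..T, (∫ s in (0 : ℝ)..t, U s) ^ 2) ≤ T ^ 3 / n ^ 2 := by
  have hc : 0 < T / n := div_pos hT (by exact_mod_cast hn)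
  obtain rfl : U = squareWave (T / n) :=
    funext fun t => by rw [hU, squareWave, div_div_eq_mul_div]
  have hX (t : ℝ) (ht : t ∈ Set.Icc 0 T) := squareWave.abs_integral_zero_le hc ht.1
  refine ⟨hX, ?_⟩
  calc (∫ t in (0 : ℝ)..T, (∫ s in (0 : ℝ)..t, squareWave (T / n) s) ^ 2)
      ≤ ∫ _ in (0 : ℝ)..T, (T / n) ^ 2 :=
        integral_mono_on hT.le (((squareWave.continuous_primitive _).pow 2).intervalIntegrable _ _)
          intervalIntegrable_const fun t ht =>
            sq_le_sq' (abs_le.1 (hX t ht)).1 (abs_le.1 (hX t ht)).2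
    _ = T ^ 3 / n ^ 2 := by rw [intervalIntegral.integral_const, smul_eq_mul]; field_simp; ring
end

section
/- Measurable selection for relaxed controls: Let K be a compact metric space and F : [0,T]×Ω×K → ℝ^m a bounded measurable function, continuous in u ∈ K, progressively measurable in (t,ω). Let q(t,ω,du) be a progressively measurable family of probability measures on K. If for each (t,ω) the set F(t,ω,K) := {F(t,ω,u) : u ∈ K} is convex, then there exists a progressively measurable K-valued process Û(t,ω) such that ∫_K F(t,ω,u) q(t,ω,du) = F(t,ω,Û(t,ω)) for a.e. (t,ω). -/
/-!
The barycenter `∫ F(t,ω,u) q(t,ω,du)` lies in the closed convex set `F(t,ω,K)`, so the fibre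
`S(t,ω) = F(t,ω,·)⁻¹{barycenter}` is a nonempty closed subset of `K`. Integration against `q` is
continuous on `C(K, ℝᵐ)`, so approximating `F` by simple functions shows the barycenter is
progressive. Hence the set of `(t,ω)` whose fibre meets a closed ball is the preimage of a closed
subset of `C(K, ℝᵐ) × ℝᵐ` (closed because `K` is compact), and so it is progressive. The
Kuratowski–Ryll-Nardzewski selection theorem on the progressive σ-algebra then yields `Û`.
-/

open MeasureTheory Filter Topology Set Metric TopologicalSpace Function

section Selection

variable {K : Type*} [MetricSpace K] [SeparableSpace K] [Nonempty K]

lemma exists_denseSeq_closedBall_succ {s : Set K} {n k : ℕ}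
    (h : (s ∩ closedBall (denseSeq K n) (2⁻¹ ^ k)).Nonempty) :
    ∃ n', (s ∩ closedBall (denseSeq K n') (2⁻¹ ^ (k + 1))).Nonempty ∧
      dist (denseSeq K n') (denseSeq K n) ≤ 2 * 2⁻¹ ^ k := by
  obtain ⟨z, hzs, hzn⟩ := h
  obtain ⟨n', hn'⟩ := denseRange_iff.1 (denseRange_denseSeq K) z (2⁻¹ ^ (k + 1)) (by positivity)
  refine ⟨n', ⟨z, hzs, mem_closedBall.2 hn'.le⟩, ?_⟩
  calc dist (denseSeq K n') (denseSeq K n)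
      ≤ dist (denseSeq K n') z + dist z (denseSeq K n) := dist_triangle _ _ _
    _ ≤ 2⁻¹ ^ (k + 1) + 2⁻¹ ^ k := add_le_add (dist_comm z _ ▸ hn'.le) hzn
    _ ≤ 2 * 2⁻¹ ^ k := by rw [pow_succ]; linarith [pow_pos (by norm_num : (0 : ℝ) < 2⁻¹) k]

open scoped Classical in
/-- Consecutive centres are within `2 * 2⁻¹ ^ k`, so they form a Cauchy sequence whose limit lies
in the closed set `s`; taking the least admissible index makes it depend measurably on `s`. -/
noncomputable def hittingIndex (s : Set K) (hs : s.Nonempty) :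
    (k : ℕ) → {n : ℕ // (s ∩ closedBall (denseSeq K n) (2⁻¹ ^ k)).Nonempty}
  | 0 =>
    have h : ∃ n, (s ∩ closedBall (denseSeq K n) (2⁻¹ ^ 0)).Nonempty := by
      obtain ⟨z, hz⟩ := hs
      obtain ⟨n, hn⟩ := denseRange_iff.1 (denseRange_denseSeq K) z 1 one_pos
      exact ⟨n, z, hz, by simpa [dist_comm] using hn.le⟩
    ⟨Nat.find h, Nat.find_spec h⟩
  | k + 1 =>
    have h := exists_denseSeq_closedBall_succ (hittingIndex s hs k).2
    ⟨Nat.find h, (Nat.find_spec h).1⟩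

noncomputable def selectionPoint [CompleteSpace K] (s : Set K) (hs : s.Nonempty) : K :=
  limUnder atTop fun k => denseSeq K (hittingIndex s hs k)

lemma tendsto_selectionPoint [CompleteSpace K] (s : Set K) (hs : s.Nonempty) :
    Tendsto (fun k => denseSeq K (hittingIndex s hs k)) atTop (𝓝 (selectionPoint s hs)) := by
  refine CauchySeq.tendsto_limUnder (cauchySeq_of_le_geometric 2⁻¹ 2 (by norm_num) fun k => ?_)
  rw [dist_comm]
  open scoped Classical in
  exact (Nat.find_spec (exists_denseSeq_closedBall_succ (hittingIndex s hs k).2)).2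

lemma selectionPoint_mem [CompleteSpace K] {s : Set K} (hs : s.Nonempty) (hcl : IsClosed s) :
    selectionPoint s hs ∈ s := by
  choose z hzs hz using fun k => (hittingIndex s hs k).2
  have hdist : Tendsto (fun k => dist (denseSeq K (hittingIndex s hs k)) (z k)) atTop (𝓝 0) :=
    squeeze_zero (fun _ => dist_nonneg) (fun k => mem_closedBall_comm.1 (hz k))
      (tendsto_pow_atTop_nhds_zero_of_lt_one (by norm_num) (by norm_num))
  exact hcl.mem_of_tendsto ((tendsto_selectionPoint s hs).congr_dist hdist)
    (Eventually.of_forall hzs)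

variable {X : Type*} {mX : MeasurableSpace X} {S : X → Set K}

open scoped Classical in
lemma measurable_hittingIndex (hne : ∀ x, (S x).Nonempty)
    (hmeas : ∀ y r, MeasurableSet {x | (S x ∩ closedBall y r).Nonempty}) :
    ∀ k, Measurable fun x => (hittingIndex (S x) (hne x) k : ℕ)
  | 0 => measurable_find _ fun _ => hmeas _ _
  | k + 1 => measurable_find _ fun n =>
      (hmeas _ _).inter (measurable_hittingIndex hne hmeas k (.of_discrete
        (s := {j | dist (denseSeq K n) (denseSeq K j) ≤ 2 * 2⁻¹ ^ k})))

/-- The Kuratowski–Ryll-Nardzewski selection theorem. -/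
theorem exists_measurable_selection [CompleteSpace K] [MeasurableSpace K] [BorelSpace K]
    (hne : ∀ x, (S x).Nonempty) (hcl : ∀ x, IsClosed (S x))
    (hmeas : ∀ y r, MeasurableSet {x | (S x ∩ closedBall y r).Nonempty}) :
    ∃ f : X → K, Measurable f ∧ ∀ x, f x ∈ S x :=
  ⟨fun x => selectionPoint (S x) (hne x),
    measurable_of_tendsto_metrizable
      (fun k => measurable_from_nat.comp (measurable_hittingIndex hne hmeas k))
      (tendsto_pi_nhds.2 fun x => tendsto_selectionPoint (S x) (hne x)),
    fun x => selectionPoint_mem (hne x) (hcl x)⟩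

end Selection

lemma MeasureTheory.SimpleFunc.stronglyMeasurable_of_forall_apply {Y β γ : Type*}
    [MeasurableSpace Y] [Nonempty β] [TopologicalSpace γ] {Φ : Y → β → γ}
    (hΦ : ∀ b, StronglyMeasurable fun p => Φ p b) (f : SimpleFunc Y β) :
    StronglyMeasurable fun p => Φ p (f p) := by
  induction f using SimpleFunc.induction' with
  | const b => exact hΦ b
  | @pcw f g s hs hf hg =>
    classical
    have : (fun p => Φ p (f.piecewise s hs g p)) =
        s.piecewise (fun p => Φ p (f p)) (fun p => Φ p (g p)) := by
      ext p
      by_cases hp : p ∈ s <;> simp [hp]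
    rw [this]
    exact hf.piecewise hs hg

namespace MeasureTheory.Filtration

variable {Ω ι : Type*} {mΩ : MeasurableSpace Ω} [Preorder ι] [MeasurableSpace ι]

/-- The progressive σ-algebra `Prog`: a set is progressive when, for every `i`, its trace on
`Iic i × Ω` is measurable for `𝓑(Iic i) ⊗ 𝓕 i`. -/
abbrev progressive (𝓕 : Filtration ι mΩ) : MeasurableSpace (ι × Ω) :=
  ⨅ i, (Subtype.instMeasurableSpace.prod (𝓕 i)).map fun p : Set.Iic i × Ω => ((p.1 : ι), p.2)

variable {𝓕 : Filtration ι mΩ}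

lemma isProgressive_iff_measurable_uncurry {β : Type*} [MeasurableSpace β] {u : ι → Ω → β} :
    IsProgressive 𝓕 u ↔ Measurable[𝓕.progressive] (uncurry u) :=
  ⟨fun hu _ ht => MeasurableSpace.measurableSet_iInf.2 fun i => hu i ht,
    fun hu i _ ht => MeasurableSpace.measurableSet_iInf.1 (hu ht) i⟩

lemma measurableSet_progressive_of_isClosed {E : Type*} [TopologicalSpace E]
    [PseudoMetrizableSpace E] {u : ι → Ω → E} (hu : IsStronglyProgressive 𝓕 u) {C : Set E}
    (hC : IsClosed C) : MeasurableSet[𝓕.progressive] {p | u p.1 p.2 ∈ C} := by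
  borelize E
  exact isProgressive_iff_measurable_uncurry.1 hu.isProgressive hC.measurableSet

end MeasureTheory.Filtration

section Barycenter

variable {K E : Type*} [TopologicalSpace K] [CompactSpace K] [MeasurableSpace K]
  [OpensMeasurableSpace K] [NormedAddCommGroup E]

lemma ContinuousMap.integrable (c : C(K, E)) (μ : Measure K) [IsFiniteMeasure μ] :
    Integrable c μ :=
  c.continuous.integrable_of_hasCompactSupport (HasCompactSupport.of_compactSpace _)

variable [NormedSpace ℝ E]

lemma ContinuousMap.continuous_integral (μ : Measure K) [IsFiniteMeasure μ] :
    Continuous fun c : C(K, E) => ∫ z, c z ∂μ := by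
  refine (LipschitzWith.of_dist_le_mul (K := (μ univ).toNNReal) fun c c' => ?_).continuous
  rw [dist_eq_norm, ← integral_sub (c.integrable μ) (c'.integrable μ), dist_eq_norm,
    ENNReal.coe_toNNReal_eq_toReal, ← measureReal_def, mul_comm]
  exact norm_integral_le_of_norm_le_const
    (Eventually.of_forall fun z => (c - c').norm_coe_le_norm z)

variable {Y : Type*} {mY : MeasurableSpace Y} {q : Y → Measure K} [∀ p, IsFiniteMeasure (q p)]

lemma MeasureTheory.StronglyMeasurable.integral_continuousMap
    (hq : ∀ c : C(K, E), StronglyMeasurable fun p => ∫ z, c z ∂q p) {G : Y → C(K, E)}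
    (hG : StronglyMeasurable G) : StronglyMeasurable fun p => ∫ z, G p z ∂q p :=
  stronglyMeasurable_of_tendsto atTop
    (fun n => (hG.approx n).stronglyMeasurable_of_forall_apply hq)
    (tendsto_pi_nhds.2 fun p =>
      ((ContinuousMap.continuous_integral (q p)).tendsto _).comp (hG.tendsto_approx p))

lemma stronglyMeasurable_integral_continuousMap_pi {ι : Type*} [Fintype ι]
    (hq : ∀ g : C(K, ℝ), StronglyMeasurable fun p => ∫ z, g z ∂q p) (c : C(K, ι → ℝ)) :
    StronglyMeasurable fun p => ∫ z, c z ∂q p := by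
  refine (measurable_pi_iff.2 fun i => ?_).stronglyMeasurable
  have hcoord : ∀ p, (∫ z, c z ∂q p) i = ∫ z, c z i ∂q p :=
    fun p => eval_integral ((c.integrable (q p)).eval) i
  simp only [hcoord]
  exact (hq ⟨fun z => c z i, by fun_prop⟩).measurable

end Barycenter

lemma ContinuousMap.isClosed_setOf_preimage_inter_nonempty {K E : Type*} [TopologicalSpace K]
    [CompactSpace K] [TopologicalSpace E] [T2Space E] {s : Set K} (hs : IsClosed s) :
    IsClosed {p : C(K, E) × E | (p.1 ⁻¹' {p.2} ∩ s).Nonempty} := by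
  have hgraph : IsClosed {x : (C(K, E) × E) × K | x.2 ∈ s ∧ x.1.1 x.2 = x.1.2} :=
    (hs.preimage continuous_snd).inter (isClosed_eq (by fun_prop) (by fun_prop))
  convert isClosedMap_fst_of_compactSpace _ hgraph using 1
  ext p
  simp [Set.Nonempty, and_comm]

open Filtration in
theorem measurable_selection_relaxed_general
    {Ω : Type*} {mΩ : MeasurableSpace Ω} (P : Measure Ω)
    (T : ℝ) (𝓕 : Filtration ℝ mΩ)
    (K : Type*) [MetricSpace K] [CompactSpace K] [Nonempty K]
    [MeasurableSpace K] [BorelSpace K]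
    {m : ℕ}
    (F : ℝ → Ω → C(K, Fin m → ℝ))
    (hFprog : ProgMeasurable 𝓕 F)
    (hconv : ∀ t ω, Convex ℝ (Set.range (F t ω)))
    (q : ℝ → Ω → Measure K) (hq : ∀ t ω, IsProbabilityMeasure (q t ω))
    (hqprog : ∀ g : C(K, ℝ), ProgMeasurable 𝓕 (fun t ω => ∫ u, g u ∂(q t ω))) :
    ∃ U : ℝ → Ω → K, ProgMeasurable 𝓕 U ∧
      ∀ᵐ p ∂((volume.restrict (Set.Icc (0:ℝ) T)).prod P),
        (∫ u, F p.1 p.2 u ∂(q p.1 p.2)) = F p.1 p.2 (U p.1 p.2) := by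
  set bary : ℝ → Ω → (Fin m → ℝ) := fun t ω => ∫ u, F t ω u ∂(q t ω)
  have hbary_mem : ∀ t ω, bary t ω ∈ range (F t ω) := fun t ω =>
    (hconv t ω).integral_mem (isCompact_range (F t ω).continuous).isClosed
      (Eventually.of_forall mem_range_self) ((F t ω).integrable _)
  have hbary : IsStronglyProgressive 𝓕 bary := fun i =>
    StronglyMeasurable.integral_continuousMap
      (stronglyMeasurable_integral_continuousMap_pi fun g => hqprog g i) (hFprog i)
  obtain ⟨U, hU, hUF⟩ := exists_measurable_selection (mX := 𝓕.progressive)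
    (S := fun p : ℝ × Ω => F p.1 p.2 ⁻¹' {bary p.1 p.2})
    (fun p => hbary_mem p.1 p.2) (fun p => isClosed_singleton.preimage (F p.1 p.2).continuous)
    fun y r => measurableSet_progressive_of_isClosed (u := fun t ω => (F t ω, bary t ω))
      (fun i => (hFprog i).prodMk (hbary i))
      (ContinuousMap.isClosed_setOf_preimage_inter_nonempty isClosed_closedBall)
  have hUprog : IsProgressive 𝓕 (curry U) := isProgressive_iff_measurable_uncurry.2 hU
  exact ⟨curry U, hUprog.isStronglyProgressive, ae_of_all _ fun p => (hUF p).symm⟩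

/-- Measurable selection for relaxed controls: if `F(t,ω,·) : K → ℝᵐ` is a bounded,
progressively measurable family of continuous functions with `F(t,ω,K)` convex, and
`q(t,ω,du)` is a progressively measurable family of probability measures on `K`,
then there is a progressively measurable `K`-valued process `Û` with
`∫_K F(t,ω,u) q(t,ω,du) = F(t,ω,Û(t,ω))` for `dt⊗P`-a.e. `(t,ω)`. -/
theorem measurable_selection_relaxed
    {Ω : Type*} {mΩ : MeasurableSpace Ω} (P : Measure Ω) [IsProbabilityMeasure P]
    (T : ℝ) (hT : 0 < T) (𝓕 : Filtration ℝ mΩ)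
    (K : Type*) [MetricSpace K] [CompactSpace K] [Nonempty K]
    [MeasurableSpace K] [BorelSpace K]
    {m : ℕ}
    (F : ℝ → Ω → C(K, Fin m → ℝ))
    (hFprog : ProgMeasurable 𝓕 F)
    (hFbdd : ∃ B, ∀ t ω u, ‖F t ω u‖ ≤ B)
    (hconv : ∀ t ω, Convex ℝ (Set.range (F t ω)))
    (q : ℝ → Ω → Measure K) (hq : ∀ t ω, IsProbabilityMeasure (q t ω))
    (hqprog : ∀ g : C(K, ℝ), ProgMeasurable 𝓕 (fun t ω => ∫ u, g u ∂(q t ω))) :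
    ∃ U : ℝ → Ω → K, ProgMeasurable 𝓕 U ∧
      ∀ᵐ p ∂((volume.restrict (Set.Icc (0:ℝ) T)).prod P),
        (∫ u, F p.1 p.2 u ∂(q p.1 p.2)) = F p.1 p.2 (U p.1 p.2) :=
  measurable_selection_relaxed_general P T 𝓕 K F hFprog hconv q hq hqprog
end

section
/- Stability of the drift functional under joint convergence: Let h : [0,T]×ℝ^d×ℝ^k×K → ℝ^k be bounded, measurable, Lipschitz in (x,y) uniformly, and continuous in u. If Xₙ → X uniformly on [0,T], Yₙ → Y pointwise dt-a.e. with uniform L² bounds, and qₙ → q stably in V (measures on [0,T]×K with time-marginal Lebesgue), then ∫ₜᵀ∫_K h(s,Xₙ(s),Yₙ(s),u) qₙ(ds,du) → ∫ₜᵀ∫_K h(s,X(s),Y(s),u) q(ds,du). -/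
open MeasureTheory Filter Set Topology

/-!
Write the integral `Iₙ` as `(Iₙ - Jₙ) + Jₙ`, where `Jₙ` integrates the limiting integrand
`h(s, X(s), Y(s), u)` against `qₙ`. Boundedness and the Lipschitz bound give
`‖h(s, Xₙ, Yₙ, u) - h(s, X, Y, u)‖ ≤ min (2M) (C (‖Xₙ(s) - X(s)‖ + ‖Yₙ(s) - Y(s)‖))`, a bound
depending on `s` alone; since every `qₙ` has Lebesgue time-marginal, `‖Iₙ - Jₙ‖` is at most the
Lebesgue integral of this bound, which tends to `0` by bounded convergence. With `X, Y` frozen,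
the integrand of `Jₙ` cut off to `[t,T] × K` is measurable, bounded and continuous in `u`, so
`Jₙ` converges by stable convergence, one coordinate at a time.
-/

def TendstoStably {α K : Type*} [MeasurableSpace α] [TopologicalSpace K] [MeasurableSpace K]
    (q : ℕ → Measure (α × K)) (qlim : Measure (α × K)) : Prop :=
  ∀ φ : α × K → ℝ, Measurable φ → (∀ s, Continuous fun u => φ (s, u)) →
    (∃ B, ∀ p, |φ p| ≤ B) → Tendsto (fun n => ∫ p, φ p ∂(q n)) atTop (𝓝 (∫ p, φ p ∂qlim))

lemma Measure.isFiniteMeasure_of_map_eq {α β : Type*} [MeasurableSpace α] [MeasurableSpace β]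
    {μ : Measure α} {ν : Measure β} [IsFiniteMeasure ν] {f : α → β} (hf : AEMeasurable f μ)
    (hμ : μ.map f = ν) : IsFiniteMeasure μ :=
  have : IsFiniteMeasure (μ.map f) := hμ ▸ inferInstance
  Measure.isFiniteMeasure_of_map hf

lemma Measurable.comp_prod_graph {α β γ K E : Type*} [MeasurableSpace α] [MeasurableSpace β]
    [MeasurableSpace γ] [MeasurableSpace K] [MeasurableSpace E] {g : α → β → γ → K → E}
    (hg : Measurable fun p : α × β × γ × K => g p.1 p.2.1 p.2.2.1 p.2.2.2) {Z : α → β}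
    {W : α → γ} (hZ : Measurable Z) (hW : Measurable W) :
    Measurable fun p : α × K => g p.1 (Z p.1) (W p.1) p.2 :=
  hg.comp (measurable_fst.prodMk ((hZ.comp measurable_fst).prodMk
    ((hW.comp measurable_fst).prodMk measurable_snd)))

lemma norm_sub_le_min_of_norm_le {F : Type*} [SeminormedAddCommGroup F] {a b : F}
    {M C r : ℝ} (ha : ‖a‖ ≤ M) (hb : ‖b‖ ≤ M) (hab : ‖a - b‖ ≤ C * r) (hr : 0 ≤ r) :
    ‖a - b‖ ≤ min (2 * |M|) (|C| * r) :=
  le_min (by linarith [norm_sub_le a b, le_abs_self M])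
    (hab.trans (mul_le_mul_of_nonneg_right (le_abs_self C) hr))

lemma tendsto_integral_min_of_tendsto_zero_ae {α : Type*} [MeasurableSpace α] {ν : Measure α}
    [IsFiniteMeasure ν] {r : ℕ → α → ℝ} (hr : ∀ n, AEMeasurable (r n) ν)
    (hr₀ : ∀ n a, 0 ≤ r n a) (hlim : ∀ᵐ a ∂ν, Tendsto (fun n => r n a) atTop (𝓝 0))
    {B : ℝ} (hB : 0 ≤ B) :
    Tendsto (fun n => ∫ a, min B (r n a) ∂ν) atTop (𝓝 0) := by
  have hdom : ∀ n, ∀ᵐ a ∂ν, ‖min B (r n a)‖ ≤ B := fun n => .of_forall fun a => by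
    rw [Real.norm_of_nonneg (le_min hB (hr₀ n a))]
    exact min_le_left _ _
  have hmin : ∀ᵐ a ∂ν, Tendsto (fun n => min B (r n a)) atTop (𝓝 0) := by
    filter_upwards [hlim] with a ha
    simpa only [min_eq_right hB] using (tendsto_const_nhds (x := B)).min ha
  simpa using tendsto_integral_of_dominated_convergence (fun _ => B)
    (fun n => (aemeasurable_const.min (hr n)).aestronglyMeasurable) (integrable_const B) hdom hmin

lemma tendsto_integral_zero_of_norm_le_comp {α β E : Type*} [MeasurableSpace α]
    [MeasurableSpace β] [NormedAddCommGroup E] [NormedSpace ℝ E] {μ : ℕ → Measure β}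
    {ν : Measure α} {f : β → α} (hf : Measurable f) (hμ : ∀ n, (μ n).map f ≤ ν)
    {F : ℕ → β → E} {g : ℕ → α → ℝ} (hg : ∀ n, Integrable (g n) ν) (hg₀ : ∀ n a, 0 ≤ g n a)
    (hFg : ∀ n b, ‖F n b‖ ≤ g n (f b)) (hlim : Tendsto (fun n => ∫ a, g n a ∂ν) atTop (𝓝 0)) :
    Tendsto (fun n => ∫ b, F n b ∂(μ n)) atTop (𝓝 0) := by
  refine squeeze_zero_norm (fun n => ?_) hlim
  have hgμ : Integrable (g n) ((μ n).map f) := (hg n).mono_measure (hμ n)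
  calc ‖∫ b, F n b ∂(μ n)‖
      ≤ ∫ b, g n (f b) ∂(μ n) :=
        norm_integral_le_of_norm_le ((integrable_map_measure hgμ.1 hf.aemeasurable).1 hgμ)
          (.of_forall (hFg n))
    _ = ∫ a, g n a ∂((μ n).map f) := (integral_map hf.aemeasurable hgμ.1).symm
    _ ≤ ∫ a, g n a ∂ν := integral_mono_measure (hμ n) (.of_forall (hg₀ n)) (hg n)

lemma tendsto_setIntegral_sub_of_norm_sub_le {α β E : Type*} [MeasurableSpace α]
    [MeasurableSpace β] [NormedAddCommGroup E] [NormedSpace ℝ E] {μ : ℕ → Measure β}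
    {ν : Measure α} [IsFiniteMeasure ν] {f : β → α} (hf : Measurable f)
    (hμ : ∀ n, (μ n).map f = ν) {G : ℕ → β → E} {G' : β → E} {M C : ℝ}
    (hG : ∀ n b, ‖G n b‖ ≤ M) (hG' : ∀ b, ‖G' b‖ ≤ M) {r : ℕ → α → ℝ}
    (hr : ∀ n, AEMeasurable (r n) ν) (hr₀ : ∀ n a, 0 ≤ r n a)
    (hrlim : ∀ᵐ a ∂ν, Tendsto (fun n => r n a) atTop (𝓝 0))
    (hGr : ∀ n b, ‖G n b - G' b‖ ≤ C * r n (f b)) (S : Set β) :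
    Tendsto (fun n => ∫ b in S, (G n b - G' b) ∂(μ n)) atTop (𝓝 0) := by
  have hg₀ : ∀ n a, 0 ≤ min (2 * |M|) (|C| * r n a) := fun n a =>
    le_min (by positivity) (mul_nonneg (abs_nonneg C) (hr₀ n a))
  refine tendsto_integral_zero_of_norm_le_comp hf
    (fun n => hμ n ▸ Measure.map_mono Measure.restrict_le_self hf) (fun n => ?_) hg₀
    (fun n b => norm_sub_le_min_of_norm_le (hG n b) (hG' b) (hGr n b) (hr₀ n (f b)))
    (tendsto_integral_min_of_tendsto_zero_ae (fun n => (hr n).const_mul |C|)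
      (fun n a => mul_nonneg (abs_nonneg C) (hr₀ n a))
      (by simpa using hrlim.mono fun a ha => ha.const_mul |C|) (by positivity))
  refine .of_bound (aemeasurable_const.min ((hr n).const_mul _)).aestronglyMeasurable (2 * |M|)
    (.of_forall fun a => ?_)
  rw [Real.norm_of_nonneg (hg₀ n a)]
  exact min_le_left _ _

lemma tendsto_integral_pi_of_forall_eval {ι α : Type*} [Fintype ι] [MeasurableSpace α]
    {γ : Type*} {l : Filter γ} {μ : γ → Measure α} {ν : Measure α} {φ : α → ι → ℝ}
    (hμ : ∀ n, Integrable φ (μ n)) (hν : Integrable φ ν)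
    (h : ∀ i, Tendsto (fun n => ∫ a, φ a i ∂(μ n)) l (𝓝 (∫ a, φ a i ∂ν))) :
    Tendsto (fun n => ∫ a, φ a ∂(μ n)) l (𝓝 (∫ a, φ a ∂ν)) := by
  refine tendsto_pi_nhds.2 fun i => ?_
  simpa only [eval_integral (hμ _).eval, eval_integral hν.eval] using h i

lemma continuous_indicator_prod_univ {α K E : Type*} [TopologicalSpace K] [Zero E]
    [TopologicalSpace E] {φ : α × K → E} (hφ : ∀ s, Continuous fun u => φ (s, u))
    (S : Set α) (s : α) : Continuous fun u => (S ×ˢ univ).indicator φ (s, u) := by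
  by_cases hs : s ∈ S
  · simpa [indicator, hs] using hφ s
  · simpa [indicator, hs] using continuous_const

lemma TendstoStably.tendsto_setIntegral_prod_univ {α K ι : Type*} [MeasurableSpace α]
    [TopologicalSpace K] [MeasurableSpace K] [Fintype ι] {q : ℕ → Measure (α × K)}
    {qlim : Measure (α × K)} [∀ n, IsFiniteMeasure (q n)] [IsFiniteMeasure qlim]
    (hq : TendstoStably q qlim) {φ : α × K → ι → ℝ} (hφm : Measurable φ)
    (hφc : ∀ s, Continuous fun u => φ (s, u)) {M : ℝ} (hφb : ∀ p, ‖φ p‖ ≤ M)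
    {S : Set α} (hS : MeasurableSet S) :
    Tendsto (fun n => ∫ p in S ×ˢ univ, φ p ∂(q n)) atTop
      (𝓝 (∫ p in S ×ˢ univ, φ p ∂qlim)) := by
  have hA : MeasurableSet (S ×ˢ (univ : Set K)) := hS.prod .univ
  have hint : ∀ (μ : Measure (α × K)) [IsFiniteMeasure μ], Integrable φ μ := fun _ _ =>
    .of_bound hφm.aestronglyMeasurable M (.of_forall hφb)
  simp only [← integral_indicator hA]
  refine tendsto_integral_pi_of_forall_eval (fun n => (hint (q n)).indicator hA)
    ((hint qlim).indicator hA) fun i => ?_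
  have hcoord : ∀ p, (S ×ˢ univ).indicator φ p i = (S ×ˢ univ).indicator (φ · i) p :=
    fun p => by by_cases hp : p ∈ S ×ˢ (univ : Set K) <;> simp [hp]
  simp only [hcoord]
  refine hq _ ((measurable_pi_apply i |>.comp hφm).indicator hA)
    (continuous_indicator_prod_univ (fun s => continuous_apply i |>.comp (hφc s)) S)
    ⟨|M|, fun p => ?_⟩
  rw [← Real.norm_eq_abs]
  exact (norm_indicator_le_norm_self _ _).trans
    ((norm_le_pi_norm (φ p) i).trans ((hφb p).trans (le_abs_self M)))

theorem drift_functional_stable_general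
    (T : ℝ) {d k : ℕ}
    (K : Type*) [MetricSpace K] [MeasurableSpace K]
    (h : ℝ → (Fin d → ℝ) → (Fin k → ℝ) → K → (Fin k → ℝ))
    (M C : ℝ)
    (hbdd : ∀ s x y u, ‖h s x y u‖ ≤ M)
    (hmeas : Measurable fun p : ℝ × (Fin d → ℝ) × (Fin k → ℝ) × K =>
      h p.1 p.2.1 p.2.2.1 p.2.2.2)
    (hLip : ∀ s x x' y y' u, ‖h s x y u - h s x' y' u‖ ≤ C * (‖x - x'‖ + ‖y - y'‖))
    (hcont : ∀ s x y, Continuous (h s x y))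
    (X : ℕ → ℝ → (Fin d → ℝ)) (Xlim : ℝ → (Fin d → ℝ))
    (hXcont : ∀ n, Continuous (X n)) (hXlimcont : Continuous Xlim)
    (hXunif : TendstoUniformlyOn X Xlim atTop (Set.Icc 0 T))
    (Y : ℕ → ℝ → (Fin k → ℝ)) (Ylim : ℝ → (Fin k → ℝ))
    (hYmeas : ∀ n, Measurable (Y n)) (hYlimmeas : Measurable Ylim)
    (hYae : ∀ᵐ s ∂(volume.restrict (Set.Icc (0:ℝ) T)),
      Tendsto (fun n => Y n s) atTop (nhds (Ylim s)))
    (q : ℕ → Measure (ℝ × K)) (qlim : Measure (ℝ × K))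
    (hmarg : ∀ n, (q n).map Prod.fst = volume.restrict (Set.Icc (0:ℝ) T))
    (hmarglim : qlim.map Prod.fst = volume.restrict (Set.Icc (0:ℝ) T))
    (hstable : ∀ φ : ℝ × K → ℝ, Measurable φ → (∀ s, Continuous fun u => φ (s, u)) →
      (∃ B, ∀ p, |φ p| ≤ B) →
      Tendsto (fun n => ∫ p, φ p ∂(q n)) atTop (nhds (∫ p, φ p ∂qlim)))
    (t : ℝ) :
    Tendsto
      (fun n => ∫ p in Set.Icc t T ×ˢ (Set.univ : Set K),
        h p.1 (X n p.1) (Y n p.1) p.2 ∂(q n))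
      atTop
      (nhds (∫ p in Set.Icc t T ×ˢ (Set.univ : Set K),
        h p.1 (Xlim p.1) (Ylim p.1) p.2 ∂qlim)) := by
  set A : Set (ℝ × K) := Set.Icc t T ×ˢ Set.univ
  have := fun n => Measure.isFiniteMeasure_of_map_eq measurable_fst.aemeasurable (hmarg n)
  have := Measure.isFiniteMeasure_of_map_eq measurable_fst.aemeasurable hmarglim
  have hint : ∀ n (Z : ℝ → Fin d → ℝ) (W : ℝ → Fin k → ℝ), Measurable Z → Measurable W →
      Integrable (fun p : ℝ × K => h p.1 (Z p.1) (W p.1) p.2) ((q n).restrict A) :=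
    fun n Z W hZ hW => .of_bound (hmeas.comp_prod_graph hZ hW).aestronglyMeasurable M
      (.of_forall fun _ => hbdd ..)
  have hrlim : ∀ᵐ s ∂volume.restrict (Set.Icc 0 T),
      Tendsto (fun n => ‖X n s - Xlim s‖ + ‖Y n s - Ylim s‖) atTop (𝓝 0) := by
    filter_upwards [hYae, ae_restrict_mem measurableSet_Icc] with s hYs hs
    simpa using (tendsto_iff_norm_sub_tendsto_zero.1 (hXunif.tendsto_at hs)).add
      (tendsto_iff_norm_sub_tendsto_zero.1 hYs)
  have hdiff := tendsto_setIntegral_sub_of_norm_sub_le measurable_fst hmarg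
    (G := fun n p => h p.1 (X n p.1) (Y n p.1) p.2)
    (G' := fun p => h p.1 (Xlim p.1) (Ylim p.1) p.2)
    (fun _ _ => hbdd ..) (fun _ => hbdd ..)
    (fun n => (((hXcont n).sub hXlimcont).norm.measurable.add
      ((hYmeas n).sub hYlimmeas).norm).aemeasurable)
    (fun _ _ => add_nonneg (norm_nonneg _) (norm_nonneg _)) hrlim (fun _ _ => hLip ..) A
  have hfrozen := TendstoStably.tendsto_setIntegral_prod_univ hstable
    (hmeas.comp_prod_graph hXlimcont.measurable hYlimmeas) (fun s => hcont s (Xlim s) (Ylim s))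
    (fun _ => hbdd ..) (measurableSet_Icc (a := t) (b := T))
  refine (by simpa using hdiff.add hfrozen : Tendsto _ _ _).congr fun n => ?_
  rw [integral_sub (hint n _ _ (hXcont n).measurable (hYmeas n))
    (hint n _ _ hXlimcont.measurable hYlimmeas), sub_add_cancel]

/-- Stability of the drift functional under joint convergence: if `h` is bounded,
measurable, Lipschitz in `(x,y)` uniformly and continuous in `u`; `Xₙ → X`
uniformly on `[0,T]`; `Yₙ → Y` `dt`-a.e. with a uniform `L²` bound; and `qₙ → q`
stably among measures on `[0,T]×K` with time-marginal Lebesgue, then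
`∫_{[t,T]×K} h(s,Xₙ(s),Yₙ(s),u) dqₙ → ∫_{[t,T]×K} h(s,X(s),Y(s),u) dq`. -/
theorem drift_functional_stable
    (T : ℝ) (hT : 0 < T) {d k : ℕ}
    (K : Type*) [MetricSpace K] [CompactSpace K] [MeasurableSpace K] [BorelSpace K]
    (h : ℝ → (Fin d → ℝ) → (Fin k → ℝ) → K → (Fin k → ℝ))
    (M C : ℝ)
    (hbdd : ∀ s x y u, ‖h s x y u‖ ≤ M)
    (hmeas : Measurable fun p : ℝ × (Fin d → ℝ) × (Fin k → ℝ) × K =>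
      h p.1 p.2.1 p.2.2.1 p.2.2.2)
    (hLip : ∀ s x x' y y' u, ‖h s x y u - h s x' y' u‖ ≤ C * (‖x - x'‖ + ‖y - y'‖))
    (hcont : ∀ s x y, Continuous (h s x y))
    (X : ℕ → ℝ → (Fin d → ℝ)) (Xlim : ℝ → (Fin d → ℝ))
    (hXcont : ∀ n, Continuous (X n)) (hXlimcont : Continuous Xlim)
    (hXunif : TendstoUniformlyOn X Xlim atTop (Set.Icc 0 T))
    (Y : ℕ → ℝ → (Fin k → ℝ)) (Ylim : ℝ → (Fin k → ℝ))
    (hYmeas : ∀ n, Measurable (Y n)) (hYlimmeas : Measurable Ylim)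
    (hYae : ∀ᵐ s ∂(volume.restrict (Set.Icc (0:ℝ) T)),
      Tendsto (fun n => Y n s) atTop (nhds (Ylim s)))
    (CY : ℝ) (hYL2 : ∀ n, ∫ s in (0:ℝ)..T, ‖Y n s‖ ^ 2 ≤ CY)
    (q : ℕ → Measure (ℝ × K)) (qlim : Measure (ℝ × K))
    (hmarg : ∀ n, (q n).map Prod.fst = volume.restrict (Set.Icc (0:ℝ) T))
    (hmarglim : qlim.map Prod.fst = volume.restrict (Set.Icc (0:ℝ) T))
    (hstable : ∀ φ : ℝ × K → ℝ, Measurable φ → (∀ s, Continuous fun u => φ (s, u)) →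
      (∃ B, ∀ p, |φ p| ≤ B) →
      Tendsto (fun n => ∫ p, φ p ∂(q n)) atTop (nhds (∫ p, φ p ∂qlim)))
    (t : ℝ) (ht : t ∈ Set.Icc (0:ℝ) T) :
    Tendsto
      (fun n => ∫ p in Set.Icc t T ×ˢ (Set.univ : Set K),
        h p.1 (X n p.1) (Y n p.1) p.2 ∂(q n))
      atTop
      (nhds (∫ p in Set.Icc t T ×ˢ (Set.univ : Set K),
        h p.1 (Xlim p.1) (Ylim p.1) p.2 ∂qlim)) :=
  drift_functional_stable_general T K h M C hbdd hmeas hLip hcont X Xlim hXcont hXlimcont hXunif Y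
    Ylim hYmeas hYlimmeas hYae q qlim hmarg hmarglim hstable t
end
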